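/- The natural color of an ultimately periodic infinite word equals the color of any of its reliable normalizations: if v is u-reliable then the natural color of u·v^ω (the minimum of col_{u′}(v′) over all decompositions u·v^ω = u′(v′)^ω with v′ u′-invariant) equals col_u(v). -/

import Mathlib

open scoped Classical

/-- Concatenation of a finite word with an infinite word. -/
def wcat {A : Type} (u : List A) (w : ℕ → A) : ℕ → A :=
  fun n => if h : n < u.length then u.get ⟨n, h⟩ else w (n - u.length)

/-- The infinite periodic word `v^ω`. -/
def wpow {A : Type} [Inhabited A] (v : List A) : ℕ → A :=
  fun n => v.getD (n % v.length) default

/-- The ultimately periodic word `u · v^ω`. -/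
def upw {A : Type} [Inhabited A] (u v : List A) : ℕ → A := wcat u (wpow v)

/-- The finite word `v^i`. -/
def wrep {A : Type} (v : List A) (i : ℕ) : List A := (List.replicate i v).flatten

/-- The right congruence `x ∼_L y`. -/
def simL {A : Type} (L : Set (ℕ → A)) (x y : List A) : Prop :=
  ∀ w : ℕ → A, wcat x w ∈ L ↔ wcat y w ∈ L

/-- `w` is `u`-invariant: `u ∼_L u·w`. -/
def UInv {A : Type} (L : Set (ℕ → A)) (u w : List A) : Prop := simL L u (u ++ w)

/-- `v` is relevant to `u`. -/
def URel {A : Type} (L : Set (ℕ → A)) (u v : List A) : Prop :=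
  ∃ z : List A, UInv L u (v ++ z)

/-- `v` has natural color at most `c` wrt `u`. -/
def ColorAtMost {A : Type} [Inhabited A] (L : Set (ℕ → A)) (u : List A) :
    ℕ → List A → Prop
  | c, v => ∀ z : List A, UInv L u (v ++ z) →
      ((upw u (v ++ z) ∈ L ↔ Even c) ∨
        ∃ i : ℕ, 0 < i ∧ ∃ c' : Fin c, ColorAtMost L u c' (wrep (v ++ z) i))
  termination_by c => c
  decreasing_by exact c'.isLt

/-- The natural color of the finite word `v` wrt `u`: `⊥` (i.e. `-∞`) if `v` is
irrelevant to `u`, and otherwise the minimal `c ≥ 0` as in the paper. -/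
noncomputable def ncol {A : Type} [Inhabited A] (L : Set (ℕ → A)) (u v : List A) :
    WithBot ℕ :=
  if URel L u v then ((sInf {c : ℕ | ColorAtMost L u c v} : ℕ) : WithBot ℕ) else ⊥

/-- `v` is stable wrt `u`. -/
def Stable {A : Type} [Inhabited A] (L : Set (ℕ → A)) (u v : List A) : Prop :=
  ∀ i : ℕ, 0 < i → ncol L u v = ncol L u (wrep v i)

/-- `v` is `u`-reliable. -/
def UReliable {A : Type} [Inhabited A] (L : Set (ℕ → A)) (u v : List A) : Prop :=
  UInv L u v ∧ Stable L u v

/-- The natural color of an ultimately periodic infinite word. -/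
noncomputable def icol {A : Type} [Inhabited A] (L : Set (ℕ → A)) (w : ℕ → A) : ℕ :=
  sInf {c : ℕ | ∃ u v : List A, v ≠ [] ∧ w = upw u v ∧ UInv L u v ∧
    ncol L u v = (c : WithBot ℕ)}

/-- The set of states visited infinitely often by a run. -/
def infSet {Q : Type} (r : ℕ → Q) : Set Q := {q | ∀ n : ℕ, ∃ m : ℕ, n ≤ m ∧ r m = q}

/-- The run of a complete deterministic automaton on an infinite word. -/
def runOf {A Q : Type} (δ : Q → A → Q) (q0 : Q) (w : ℕ → A) : ℕ → Q
  | 0 => q0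
  | n + 1 => δ (runOf δ q0 w n) (w n)

/-- `L` is ω-regular: recognized by some deterministic Muller automaton. -/
def OmegaRegular {A : Type} (L : Set (ℕ → A)) : Prop :=
  ∃ (Q : Type) (_ : Fintype Q) (q0 : Q) (δ : Q → A → Q) (α : Set (Set Q)),
    ∀ w : ℕ → A, w ∈ L ↔ infSet (runOf δ q0 w) ∈ α


/-! Colors are finite. Fix a deterministic Muller automaton for `L` with state set `Q` and
let `M = |Q|!`, so that `f^M ∘ f^M = f^M` on every orbit of every `f : Q → Q`. The run on
`u·H·B^ω` then loops along `B^M` after `u·H·B^M`, and if `B'` extends `B^{2M}`, the infinity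
set of `u·H·B'^M·B^ω` is contained in that of `u·H·B'^ω`. Along a chain `B, B', B'', …` of
`u`-invariant words on which membership of `u·B^ω` in `L` keeps flipping these inclusions are
strict, so such chains have length at most `|Q|`, and colors are at most `2|Q| + 3`.

Minimality: let `u'·v'^ω = u·v^ω` with `v'` `u'`-invariant of color `c` below the color of
the reliable `v`. Cut both decompositions at a common position, so that `u'·v'^k = u·v^q·x`
with `v = x·y`. Reliability gives a `u`-invariant `v^i·z` witnessing that `c` is too small,
and conjugating it by `x` yields a `u·v^q·x`-invariant word that starts with `v'` and still
witnesses this; but `v'` has color `c` with respect to `u'·v'^k ∼ u·v^q·x`. -/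

open Function Fintype
open scoped Nat

variable {A : Type}

section Words

theorem wcat_of_lt (u : List A) (w : ℕ → A) {n : ℕ} (h : n < u.length) :
    wcat u w n = u[n] := by
  simp [wcat, h]

theorem wcat_of_le (u : List A) (w : ℕ → A) {n : ℕ} (h : u.length ≤ n) :
    wcat u w n = w (n - u.length) := by
  simp [wcat, Nat.not_lt.mpr h]

@[simp] theorem wcat_nil (w : ℕ → A) : wcat [] w = w := by
  funext n
  simp [wcat]

theorem wcat_append (a b : List A) (w : ℕ → A) :
    wcat (a ++ b) w = wcat a (wcat b w) := by
  funext n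
  by_cases ha : n < a.length
  · rw [wcat_of_lt _ _ (by simp; omega), wcat_of_lt _ _ ha, List.getElem_append_left ha]
  by_cases hab : n < a.length + b.length
  · rw [wcat_of_lt _ _ (by simp; omega), wcat_of_le _ _ (by omega), wcat_of_lt _ _ (by omega),
      List.getElem_append_right (by omega)]
  · rw [wcat_of_le _ _ (by simp; omega), wcat_of_le _ _ (by omega), wcat_of_le _ _ (by omega)]
    simp only [List.length_append, Nat.sub_sub]

theorem prefix_of_wcat_eq {p p' : List A} {s s' : ℕ → A} (h : wcat p s = wcat p' s')
    (hl : p.length ≤ p'.length) : p <+: p' := by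
  rw [List.prefix_iff_eq_take]
  refine List.ext_getElem (by simp; omega) fun j hj _ => ?_
  have hj' : j < p'.length := by omega
  simpa [wcat_of_lt _ _ hj, wcat_of_lt _ _ hj'] using congrFun h j

theorem wcat_inj {p p' : List A} {s s' : ℕ → A} (h : wcat p s = wcat p' s')
    (hl : p.length = p'.length) : p = p' ∧ s = s' := by
  obtain rfl := (prefix_of_wcat_eq h hl.le).eq_of_length hl
  refine ⟨rfl, funext fun m => ?_⟩
  simpa [wcat_of_le _ _ (Nat.le_add_right p.length m)] using congrFun h (p.length + m)

theorem wrep_succ (v : List A) (i : ℕ) : wrep v (i + 1) = v ++ wrep v i := by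
  simp [wrep, List.replicate_succ]

theorem wrep_add (v : List A) (a b : ℕ) : wrep v (a + b) = wrep v a ++ wrep v b := by
  simp only [wrep, List.replicate_add, List.flatten_append]

@[simp] theorem length_wrep (v : List A) (i : ℕ) : (wrep v i).length = i * v.length := by
  simp [wrep, List.sum_replicate]

theorem prefix_wrep (v : List A) {i : ℕ} (hi : 0 < i) : v <+: wrep v i := by
  obtain ⟨j, rfl⟩ := Nat.exists_eq_add_of_lt hi
  rw [Nat.zero_add, wrep_succ]
  exact List.prefix_append _ _

theorem wrep_ne_nil {v : List A} (hv : v ≠ []) {i : ℕ} (hi : 0 < i) : wrep v i ≠ [] :=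
  fun h => hv (List.prefix_nil.mp (h ▸ prefix_wrep v hi))

theorem append_wrep_eq_wrep_append (x y : List A) (i : ℕ) :
    y ++ wrep (x ++ y) i = wrep (y ++ x) i ++ y := by
  induction i with
  | zero => simp [wrep]
  | succ i ih => simp only [wrep_succ, List.append_assoc, ih]

theorem foldl_wrep {Q : Type} (δ : Q → A → Q) (s : Q) (W : List A) (k : ℕ) :
    (wrep W k).foldl δ s = (fun t => W.foldl δ t)^[k] s := by
  induction k generalizing s with
  | zero => rfl
  | succ k ih => rw [wrep_succ, List.foldl_append, ih, iterate_succ_apply]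

variable [Inhabited A]

theorem wcat_wpow (W : List A) : wcat W (wpow W) = wpow W := by
  funext n
  by_cases h : n < W.length
  · rw [wcat_of_lt _ _ h, wpow, Nat.mod_eq_of_lt h, List.getD_eq_getElem]
  · rw [wcat_of_le _ _ (by omega), wpow, wpow, ← Nat.mod_eq_sub_mod (by omega)]

theorem wcat_wrep_wpow (W : List A) (k : ℕ) : wcat (wrep W k) (wpow W) = wpow W := by
  induction k with
  | zero => simp [wrep]
  | succ k ih => rw [wrep_succ, wcat_append, ih, wcat_wpow]

theorem eq_wpow_of_wcat_eq {W : List A} (hW : W ≠ []) {w : ℕ → A} (h : wcat W w = w) :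
    w = wpow W := by
  have hlen : 0 < W.length := List.length_pos_iff.mpr hW
  funext n
  induction n using Nat.strong_induction_on with
  | _ n ih =>
    rw [← h, ← wcat_wpow W]
    by_cases hn : n < W.length
    · rw [wcat_of_lt _ _ hn, wcat_of_lt _ _ hn]
    · rw [wcat_of_le _ _ (by omega), wcat_of_le _ _ (by omega), ih _ (by omega)]

theorem wpow_wrep (W : List A) {k : ℕ} (hk : 0 < k) : wpow (wrep W k) = wpow W := by
  rcases eq_or_ne W [] with rfl | hW
  · simp [wrep]
  · exact (eq_wpow_of_wcat_eq (wrep_ne_nil hW hk) (wcat_wrep_wpow W k)).symm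

theorem wcat_wpow_append_comm (x y : List A) :
    wcat x (wpow (y ++ x)) = wpow (x ++ y) := by
  rcases eq_or_ne (x ++ y) [] with hxy | hxy
  · obtain ⟨rfl, rfl⟩ := List.append_eq_nil_iff.mp hxy
    simp
  · refine eq_wpow_of_wcat_eq hxy ?_
    rw [wcat_append, ← wcat_append y, wcat_wpow]

theorem upw_append_append_comm (u x D : List A) :
    upw (u ++ x) (D ++ x) = upw u (x ++ D) := by
  rw [upw, upw, wcat_append, wcat_wpow_append_comm]

end Words

section Invariance

variable {L : Set (ℕ → A)}

theorem simL_refl (x : List A) : simL L x x := fun _ => Iff.rfl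

theorem simL.symm {x y : List A} (h : simL L x y) : simL L y x := fun w => (h w).symm

theorem simL.trans {x y z : List A} (h₁ : simL L x y) (h₂ : simL L y z) : simL L x z :=
  fun w => (h₁ w).trans (h₂ w)

theorem simL.append_right {x y : List A} (h : simL L x y) (t : List A) :
    simL L (x ++ t) (y ++ t) := fun w => by
  rw [wcat_append, wcat_append]
  exact h _

theorem uInv_nil (u : List A) : UInv L u [] := by
  simpa [UInv] using simL_refl u

theorem UInv.append {u H K : List A} (hH : UInv L u H) (hK : UInv L u K) :
    UInv L u (H ++ K) := fun w => by
  rw [← List.append_assoc, wcat_append _ K]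
  exact (hK w).trans (by rw [wcat_append]; exact hH _)

theorem UInv.wrep {u B : List A} (h : UInv L u B) (i : ℕ) : UInv L u (wrep B i) := by
  induction i with
  | zero => exact uInv_nil u
  | succ i ih => rw [wrep_succ]; exact h.append ih

theorem UInv.congr {u u' X : List A} (h : simL L u u') (hX : UInv L u X) : UInv L u' X :=
  h.symm.trans (hX.trans (h.append_right X))

theorem UInv.append_append_comm {u u₀ x D : List A} (hu : simL L u₀ u)
    (h : UInv L u (x ++ D)) : UInv L (u₀ ++ x) (D ++ x) := by
  have h' : simL L (u₀ ++ x) (u₀ ++ (x ++ D ++ x)) := by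
    refine (hu.append_right x).trans ((h.append_right x).trans ?_)
    simpa only [List.append_assoc] using hu.symm.append_right (x ++ D ++ x)
  simpa [UInv] using h'

theorem uRel_of_uInv {u v : List A} (h : UInv L u v) : URel L u v :=
  ⟨[], by rwa [List.append_nil]⟩

theorem UInv.upw_mem_iff [Inhabited A] {u H : List A} (h : UInv L u H) (B : List A) :
    upw (u ++ H) B ∈ L ↔ upw u B ∈ L :=
  (h (wpow B)).symm

end Invariance

section Color

variable [Inhabited A] {L : Set (ℕ → A)}

theorem colorAtMost_iff (u : List A) (c : ℕ) (v : List A) :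
    ColorAtMost L u c v ↔ ∀ z : List A, UInv L u (v ++ z) →
      ((upw u (v ++ z) ∈ L ↔ Even c) ∨
        ∃ i : ℕ, 0 < i ∧ ∃ c' : Fin c, ColorAtMost L u c' (wrep (v ++ z) i)) := by
  rw [ColorAtMost]

theorem ColorAtMost.append {u v : List A} {c : ℕ} (h : ColorAtMost L u c v) (d : List A) :
    ColorAtMost L u c (v ++ d) := by
  rw [colorAtMost_iff] at h ⊢
  intro z hz
  simpa only [List.append_assoc] using h (d ++ z) (by simpa only [List.append_assoc] using hz)

theorem ColorAtMost.of_prefix {u v v' : List A} {c : ℕ} (h : ColorAtMost L u c v)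
    (hv : v <+: v') : ColorAtMost L u c v' := by
  obtain ⟨d, rfl⟩ := hv
  exact h.append d

theorem ColorAtMost.congr {u u' : List A} (hu : simL L u u') {c : ℕ} {v : List A}
    (h : ColorAtMost L u c v) : ColorAtMost L u' c v := by
  induction c using Nat.strong_induction_on generalizing v with
  | _ c ih =>
    rw [colorAtMost_iff] at h ⊢
    intro z hz
    rcases h z (hz.congr hu.symm) with hpar | ⟨i, hi, c', hc'⟩
    · exact .inl ((hu (wpow (v ++ z))).symm.trans hpar)
    · exact .inr ⟨i, hi, c', ih c' c'.isLt hc'⟩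

/-- `D` shows directly, with the extension `z = []`, that `D` does not have color at most
`c` with respect to `u`. -/
def RefutesColor (L : Set (ℕ → A)) (u : List A) (c : ℕ) (D : List A) : Prop :=
  UInv L u D ∧ ¬(upw u D ∈ L ↔ Even c) ∧
    ∀ i : ℕ, 0 < i → ∀ c' < c, ¬ColorAtMost L u c' (wrep D i)

theorem exists_refutesColor_of_not_colorAtMost {u v : List A} {c : ℕ}
    (h : ¬ColorAtMost L u c v) : ∃ z, RefutesColor L u c (v ++ z) := by
  rw [colorAtMost_iff] at h
  push Not at h
  obtain ⟨z, hz, hpar, hpow⟩ := h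
  exact ⟨z, hz, fun h => by tauto, fun i hi c' hc' => hpow i hi ⟨c', hc'⟩⟩

theorem RefutesColor.not_colorAtMost {u D : List A} {c : ℕ} (hD : RefutesColor L u c D) :
    ¬ColorAtMost L u c D := by
  rw [colorAtMost_iff]
  intro h
  rcases h [] (by simpa using hD.1) with hpar | ⟨i, hi, c', hc'⟩
  · exact hD.2.1 (by simpa using hpar)
  · exact hD.2.2 i hi c' c'.isLt (by simpa using hc')

theorem RefutesColor.append_append_comm {u u₀ x D : List A} {c : ℕ} (hu : simL L u₀ u)
    (hD : RefutesColor L u c (x ++ D)) : RefutesColor L (u₀ ++ x) c (D ++ x) := by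
  induction c using Nat.strong_induction_on generalizing D with
  | _ c ih =>
    obtain ⟨hinv, hpar, hpow⟩ := hD
    refine ⟨hinv.append_append_comm hu, ?_, fun i hi c' hc' hcol => ?_⟩
    · rw [upw_append_append_comm]
      exact fun h => hpar ((hu (wpow (x ++ D))).symm.trans h)
    · -- the power `(x·D)^(i+1)` is `x · (D·x)^i · D`
      obtain ⟨z, hz⟩ := exists_refutesColor_of_not_colorAtMost (hpow (i + 1) (by omega) c' hc')
      have hz' := ih c' hc' (D := D ++ wrep (x ++ D) i ++ z) (by simpa [wrep_succ] using hz)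
      rw [show D ++ wrep (x ++ D) i ++ z ++ x = wrep (D ++ x) i ++ (D ++ z ++ x) by
        rw [append_wrep_eq_wrep_append]; simp] at hz'
      exact hz'.not_colorAtMost (hcol.append _)

theorem ncol_of_uInv {u v : List A} (h : UInv L u v) :
    ncol L u v = (sInf {c | ColorAtMost L u c v} : ℕ) := by
  rw [ncol, if_pos (uRel_of_uInv h)]

theorem UReliable.sInf_colorAtMost_le {u v : List A} (h : UReliable L u v) {i c : ℕ}
    (hi : 0 < i) (hc : ColorAtMost L u c (wrep v i)) :
    sInf {c | ColorAtMost L u c v} ≤ c := by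
  have hst := h.2 i hi
  rw [ncol_of_uInv h.1, ncol_of_uInv (h.1.wrep i), Nat.cast_inj] at hst
  exact hst ▸ Nat.sInf_le hc

end Color

section Chains

variable [Inhabited A] {L : Set (ℕ → A)}

def AltChain (L : Set (ℕ → A)) (u : List A) (N : ℕ) : ℕ → List A → Prop
  | 0, _ => True
  | m + 1, B => ∃ z, UInv L u (wrep B N ++ z) ∧
      ¬(upw u (wrep B N ++ z) ∈ L ↔ upw u B ∈ L) ∧ AltChain L u N m (wrep B N ++ z)

theorem exists_le_lt_add_two_even_iff (P : Prop) (n : ℕ) :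
    ∃ c, n ≤ c ∧ c < n + 2 ∧ (P ↔ Even c) := by
  by_cases hP : P <;> by_cases hn : Even n
  · exact ⟨n, le_rfl, by omega, by tauto⟩
  · exact ⟨n + 1, by omega, by omega, by simp [Nat.even_add_one, hP, hn]⟩
  · exact ⟨n + 1, by omega, by omega, by simp [Nat.even_add_one, hP, hn]⟩
  · exact ⟨n, le_rfl, by omega, by tauto⟩

theorem colorAtMost_wrep_of_altChain_le {u : List A} {N : ℕ} (hN : 0 < N) (c : ℕ)
    {B : List A} (hchain : ∀ m, AltChain L u N m B → 2 * m ≤ c)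
    (hpar : upw u B ∈ L ↔ Even c) : ColorAtMost L u c (wrep B N) := by
  induction c using Nat.strong_induction_on generalizing B with
  | _ c ih =>
    rw [colorAtMost_iff]
    intro z hz
    by_cases hflip : upw u (wrep B N ++ z) ∈ L ↔ upw u B ∈ L
    · exact .inl (hflip.trans hpar)
    · have hc : 2 ≤ c := hchain 1 ⟨z, hz, hflip, trivial⟩
      refine .inr ⟨N, hN, ⟨c - 1, by omega⟩, ih (c - 1) (by omega) ?_ ?_⟩
      · intro m hm
        have := hchain (m + 1) ⟨z, hz, hflip, hm⟩
        omega
      · have hodd : Even (c - 1) ↔ ¬Even c := by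
          rw [Nat.even_iff, Nat.even_iff]
          omega
        tauto

theorem exists_colorAtMost_of_altChain_bounded {u : List A} {N K : ℕ} (hN : 0 < N)
    (hK : ∀ B, B ≠ [] → UInv L u B → ∀ m, AltChain L u N m B → m ≤ K) (v : List A) :
    ∃ c, ColorAtMost L u c v := by
  obtain ⟨C, hC, -, hCpar⟩ := exists_le_lt_add_two_even_iff (upw u [] ∈ L) (2 * K + 2)
  refine ⟨C, (colorAtMost_iff u C v).mpr fun z hz => ?_⟩
  by_cases hvz : v ++ z = []
  · exact .inl (hvz ▸ hCpar)
  · obtain ⟨c, hc, hcC, hcpar⟩ := exists_le_lt_add_two_even_iff (upw u (v ++ z) ∈ L) (2 * K)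
    refine .inr ⟨N, hN, ⟨c, by omega⟩, colorAtMost_wrep_of_altChain_le hN c ?_ hcpar⟩
    intro m hm
    have := hK _ hvz hz m hm
    omega

end Chains

section Automaton

variable {Q : Type} (δ : Q → A → Q)

theorem isFixedPt_iterate_factorial_card [Fintype Q] (f : Q → Q) (x : Q) :
    IsFixedPt f^[(card Q)!] (f^[(card Q)!] x) := by
  obtain ⟨i, j, hij, heq⟩ :=
    Fintype.exists_ne_map_eq_of_card_lt (fun k : Fin (card Q + 1) => f^[k] x) (by simp)
  wlog hlt : (i : ℕ) < j generalizing i j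
  · exact this j i hij.symm heq.symm (by omega)
  have hper : IsPeriodicPt f (j - i) (f^[i] x) := by
    rw [IsPeriodicPt, IsFixedPt, ← iterate_add_apply, Nat.sub_add_cancel hlt.le]
    exact heq.symm
  have hle : (i : ℕ) ≤ (card Q)! := (Nat.le_of_lt_succ i.isLt).trans (Nat.self_le_factorial _)
  have hmem : f^[(card Q)!] x ∈ periodicPts f := by
    rw [← Nat.sub_add_cancel hle, iterate_add_apply]
    exact mk_mem_periodicPts (by omega) (hper.apply_iterate _)
  exact isPeriodicPt_factorial_card_of_mem_periodicPts hmem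

theorem runOf_wcat_of_le (q : Q) (x : List A) (s : ℕ → A) {j : ℕ} (hj : j ≤ x.length) :
    runOf δ q (wcat x s) j = (x.take j).foldl δ q := by
  induction j with
  | zero => rfl
  | succ j ih =>
    rw [runOf, ih (by omega), wcat_of_lt _ _ (by omega), List.take_succ_eq_append_getElem,
      List.foldl_append]
    rfl

def loopStates (s : Q) (W : List A) : Set Q := {q | ∃ j < W.length, (W.take j).foldl δ s = q}

theorem loopStates_mono (s : Q) {W W' : List A} (h : W <+: W') :
    loopStates δ s W ⊆ loopStates δ s W' := by
  obtain ⟨t, rfl⟩ := h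
  rintro q ⟨j, hj, rfl⟩
  exact ⟨j, by simp; omega, by rw [List.take_append_of_le_length hj.le]⟩

theorem loopStates_foldl_subset (s : Q) (V W : List A) :
    loopStates δ (V.foldl δ s) W ⊆ loopStates δ s (V ++ W) := by
  rintro q ⟨j, hj, rfl⟩
  exact ⟨V.length + j, by simp; omega, by rw [List.take_length_add_append, List.foldl_append]⟩

theorem infSet_runOf_wcat_wpow_of_loop [Inhabited A] (q₀ : Q) (p : List A) {W : List A}
    (hW : W ≠ []) (hloop : W.foldl δ (p.foldl δ q₀) = p.foldl δ q₀) :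
    infSet (runOf δ q₀ (wcat p (wpow W))) = loopStates δ (p.foldl δ q₀) W := by
  have hlen : 0 < W.length := List.length_pos_iff.mpr hW
  have hrun : ∀ k j, j ≤ W.length →
      runOf δ q₀ (wcat p (wpow W)) (p.length + k * W.length + j) =
        (W.take j).foldl δ (p.foldl δ q₀) := by
    intro k j hj
    have hfix : (wrep W k).foldl δ (p.foldl δ q₀) = p.foldl δ q₀ := by
      rw [foldl_wrep]
      exact iterate_fixed hloop k
    rw [← wcat_wrep_wpow W k, ← wcat_wpow W, ← wcat_append, ← wcat_append,
      runOf_wcat_of_le _ _ _ _ (by simp; omega),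
      show p.length + k * W.length + j = (p ++ wrep W k).length + j by simp,
      List.take_length_add_append, List.foldl_append, List.foldl_append, hfix]
  ext q
  constructor
  · intro hq
    obtain ⟨m, hm, rfl⟩ := hq p.length
    refine ⟨(m - p.length) % W.length, Nat.mod_lt _ hlen, ?_⟩
    rw [← hrun ((m - p.length) / W.length) _ (Nat.mod_lt _ hlen).le]
    congr 1
    have := Nat.div_add_mod' (m - p.length) W.length
    omega
  · rintro ⟨j, hj, rfl⟩ n
    exact ⟨p.length + n * W.length + j, by nlinarith, hrun n j hj.le⟩

variable [Inhabited A] [Fintype Q]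

theorem infSet_runOf_upw (q₀ : Q) (p : List A) {B : List A} (hB : B ≠ []) :
    infSet (runOf δ q₀ (upw p B)) =
      loopStates δ ((p ++ wrep B (card Q)!).foldl δ q₀) (wrep B (card Q)!) := by
  have hpos : 0 < (card Q)! := Nat.factorial_pos _
  rw [upw, ← wcat_wrep_wpow B (card Q)!, ← wcat_append, ← wpow_wrep B hpos]
  refine infSet_runOf_wcat_wpow_of_loop δ q₀ _ (wrep_ne_nil hB hpos) ?_
  rw [List.foldl_append, foldl_wrep, foldl_wrep, (isFixedPt_iterate_factorial_card _ _).eq]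

theorem infSet_runOf_upw_subset (q₀ : Q) (p : List A) {B : List A} (hB : B ≠ []) (z : List A) :
    infSet (runOf δ q₀ (upw (p ++ wrep (wrep B (2 * (card Q)!) ++ z) (card Q)!) B)) ⊆
      infSet (runOf δ q₀ (upw p (wrep B (2 * (card Q)!) ++ z))) := by
  have hpos : 0 < (card Q)! := Nat.factorial_pos _
  have hB' : wrep B (2 * (card Q)!) ++ z ≠ [] :=
    List.append_ne_nil_of_left_ne_nil (wrep_ne_nil hB (by omega)) z
  rw [infSet_runOf_upw δ q₀ _ hB, infSet_runOf_upw δ q₀ _ hB', List.foldl_append]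
  refine (loopStates_foldl_subset δ _ _ _).trans (loopStates_mono δ _ ?_)
  rw [← wrep_add, ← two_mul]
  exact (List.prefix_append _ z).trans (prefix_wrep _ hpos)

end Automaton

section Bound

variable [Inhabited A] {L : Set (ℕ → A)} {Q : Type} [Fintype Q] {δ : Q → A → Q} {q₀ : Q}
  {α : Set (Set Q)}

theorem exists_add_ncard_infSet_le_of_altChain
    (hL : ∀ w, w ∈ L ↔ infSet (runOf δ q₀ w) ∈ α) (u : List A) (m : ℕ) {B : List A}
    (hB : B ≠ []) (hchain : AltChain L u (2 * (card Q)!) m B) :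
    ∃ H, UInv L u H ∧ m + (infSet (runOf δ q₀ (upw (u ++ H) B))).ncard ≤ card Q := by
  induction m generalizing B with
  | zero =>
    refine ⟨[], uInv_nil u, ?_⟩
    rw [Nat.zero_add, ← Nat.card_eq_fintype_card]
    exact Set.ncard_le_card _
  | succ m ih =>
    obtain ⟨z, hz, hflip, hchain'⟩ := hchain
    have hB' : wrep B (2 * (card Q)!) ++ z ≠ [] :=
      List.append_ne_nil_of_left_ne_nil (wrep_ne_nil hB (by positivity)) z
    obtain ⟨H, hH, hle⟩ := ih hB' hchain'
    set B' := wrep B (2 * (card Q)!) ++ z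
    have hH' : UInv L u (H ++ wrep B' (card Q)!) := hH.append (hz.wrep _)
    refine ⟨_, hH', ?_⟩
    have hsub : infSet (runOf δ q₀ (upw (u ++ (H ++ wrep B' (card Q)!)) B)) ⊆
        infSet (runOf δ q₀ (upw (u ++ H) B')) := by
      simpa only [List.append_assoc] using infSet_runOf_upw_subset δ q₀ (u ++ H) hB z
    have hne : infSet (runOf δ q₀ (upw (u ++ (H ++ wrep B' (card Q)!)) B)) ≠
        infSet (runOf δ q₀ (upw (u ++ H) B')) := fun h => by
      apply hflip
      rw [← hH.upw_mem_iff, ← hH'.upw_mem_iff, hL, hL, h]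
    have := Set.ncard_lt_ncard (hsub.ssubset_of_ne hne)
    omega

theorem exists_colorAtMost (hreg : OmegaRegular L) (u v : List A) :
    ∃ c, ColorAtMost L u c v := by
  obtain ⟨Q, _, q₀, δ, α, hL⟩ := hreg
  refine exists_colorAtMost_of_altChain_bounded (N := 2 * (card Q)!) (K := card Q)
    (by positivity) (fun B hB _ m hm => ?_) v
  obtain ⟨H, -, hle⟩ := exists_add_ncard_infSet_le_of_altChain hL u m hB hm
  omega

end Bound

section Minimality

variable [Inhabited A] {L : Set (ℕ → A)}

theorem exists_cut_of_upw_eq {u v u' v' : List A} (hv : v ≠ []) (hv' : v' ≠ [])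
    (hw : upw u v = upw u' v') :
    ∃ k q x y, v = x ++ y ∧ u' ++ wrep v' k = u ++ wrep v q ++ x ∧
      v' <+: y ++ wrep v v'.length := by
  have hvl : 0 < v.length := List.length_pos_iff.mpr hv
  have hv'l : 0 < v'.length := List.length_pos_iff.mpr hv'
  -- cut after `u'·v'^|u|`, which is at least as long as `u`
  set n := u'.length + u.length * v'.length - u.length
  set r := n % v.length
  refine ⟨u.length, n / v.length, v.take r, v.drop r, (List.take_append_drop r v).symm, ?_⟩
  have hw' : wcat (u' ++ wrep v' u.length) (wpow v') =
      wcat (u ++ wrep v (n / v.length) ++ v.take r) (wpow (v.drop r ++ v.take r)) := by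
    rw [wcat_append, wcat_wrep_wpow, wcat_append, wcat_append, wcat_wpow_append_comm,
      List.take_append_drop, wcat_wrep_wpow]
    exact hw.symm
  have hr : r < v.length := Nat.mod_lt n hvl
  obtain ⟨hcut, hper⟩ := wcat_inj hw' (by
    have := Nat.div_add_mod' n v.length
    have : u.length ≤ u.length * v'.length := Nat.le_mul_of_pos_right _ hv'l
    simp only [List.length_append, length_wrep, List.length_take, Nat.min_eq_left hr.le]
    omega)
  refine ⟨hcut, ?_⟩
  have hpre : v' <+: wrep (v.drop r ++ v.take r) v'.length := by
    refine prefix_of_wcat_eq (s := wpow v') (s' := wpow (v.drop r ++ v.take r)) ?_ ?_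
    · rw [wcat_wpow, wcat_wrep_wpow, hper]
    · rw [length_wrep, List.length_append, List.length_drop, List.length_take,
        Nat.min_eq_left hr.le, Nat.sub_add_cancel hr.le]
      exact Nat.le_mul_of_pos_right _ hvl
  have hconj := append_wrep_eq_wrep_append (v.take r) (v.drop r) v'.length
  rw [List.take_append_drop] at hconj
  rw [hconj]
  exact hpre.trans (List.prefix_append _ _)

theorem not_colorAtMost_of_upw_eq {u v u' v' : List A} (hv : v ≠ []) (hinv : UInv L u v)
    (hv' : v' ≠ []) (hinv' : UInv L u' v') (hw : upw u v = upw u' v') {c : ℕ}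
    (hc : ∀ i, 0 < i → ¬ColorAtMost L u c (wrep v i)) : ¬ColorAtMost L u' c v' := by
  intro hcol
  obtain ⟨k, q, x, y, rfl, hcut, hpre⟩ := exists_cut_of_upw_eq hv hv' hw
  obtain ⟨z, hz⟩ := exists_refutesColor_of_not_colorAtMost (hc (v'.length + 1) (by omega))
  rw [wrep_succ, List.append_assoc, List.append_assoc] at hz
  have hz' := hz.append_append_comm (hinv.wrep q).symm
  rw [← hcut] at hz'
  exact hz'.not_colorAtMost ((hcol.congr (hinv'.wrep k)).of_prefix
    (hpre.trans ⟨z ++ x, by simp⟩))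

end Minimality

/-- the natural color of an ultimately periodic word equals the color
of any of its reliable normalizations. -/
theorem infcolor_eq_reliable_color {A : Type} [Inhabited A] (L : Set (ℕ → A))
    (hreg : OmegaRegular L) (u v : List A) (hv : v ≠ []) (hrel : UReliable L u v) :
    ncol L u v = ((icol L (upw u v) : ℕ) : WithBot ℕ) := by
  have hcol := ncol_of_uInv hrel.1
  rw [hcol, Nat.cast_inj, icol]
  refine le_antisymm (le_csInf ⟨_, u, v, hv, rfl, hrel.1, hcol⟩ ?_)
    (Nat.sInf_le ⟨u, v, hv, rfl, hrel.1, hcol⟩)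
  rintro b ⟨u', v', hv', hw, hinv', hb⟩
  rw [ncol_of_uInv hinv', Nat.cast_inj] at hb
  have hcol' : ColorAtMost L u' b v' := hb ▸ Nat.sInf_mem (exists_colorAtMost hreg u' v')
  by_contra hlt
  exact not_colorAtMost_of_upw_eq hv hrel.1 hv' hinv' hw
    (fun i hi hc => hlt (hrel.sInf_colorAtMost_le hi hc)) hcol'
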